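/- arXiv:1211.2764 — 7 statements merged into one kernel-verified Lean document; each statement's English description precedes it below -/
import Mathlib

section
/- Let X be a compact Hausdorff space of countable tightness and let F = {F_n : n ∈ ω} be a countable filter base in X with F_{n+1} ⊆ F_n. Then there exists a point x ∈ ⋂_{n} closure(F_n) and a countable family A of nonempty sets, each of which meets every F_n, such that A is a local π-net at x: every neighbourhood of x contains a member of A. -/
/-!
Suppose no point of `⋂ n, closure (F n)` has a countable local π-net of `F`-positive sets.
Along `ω₁` we choose disjoint closed pairs `(A ξ, B ξ)` such that every finite cut pattern
`B β₁ ∩ ⋯ ∩ B βₖ ∩ A γ₁ ∩ ⋯ ∩ A γₘ` with all `βᵢ` below all `γⱼ` stays `F`-positive.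
At stage `ξ` let `z` be a cluster point of the countably many `B`-patterns below `ξ` (cut down
to the `F n`); the countable family of all patterns below `ξ`, cut down to the `F n`, is not a
π-net at `z`, which gives a neighbourhood `U` of `z` containing none of them. Take `A ξ := Uᶜ`
and `B ξ` a closed neighbourhood of `z` inside `U`.

By compactness there are points `x α ∈ ⋂_{β < α} B β ∩ ⋂_{γ ≥ α} A γ`. A cluster point `p` of
the tails of `x` lies, by countable tightness, in the closure of countably many `x γ`, all with
`γ ≤ δ` for some `δ < ω₁`. Then `p ∈ A δ`, while also `p ∈ closure {x γ | δ < γ} ⊆ B δ`.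
-/

open Set Topology
open scoped Ordinal

theorem WellFoundedLT.exists_forall_of_forall_exists {ι α : Type*} [LT ι] [WellFoundedLT ι]
    [Nonempty α] (P : ι → (ι → α) → α → Prop)
    (hlocal : ∀ ξ f g a, (∀ β < ξ, f β = g β) → P ξ f a → P ξ g a)
    (hstep : ∀ ξ f, (∀ β < ξ, P β f (f β)) → ∃ a, P ξ f a) :
    ∃ f : ι → α, ∀ ξ, P ξ f (f ξ) := by
  classical
  let f : ι → α := wellFounded_lt.fix fun ξ ih =>
    if h : ∃ a, P ξ (fun β => if hβ : β < ξ then ih β hβ else Classical.arbitrary α) a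
    then h.choose else Classical.arbitrary α
  refine ⟨f, fun ξ => wellFounded_lt.induction (C := fun ξ => P ξ f (f ξ)) ξ fun ξ ih => ?_⟩
  let g : ι → α := fun β => if β < ξ then f β else Classical.arbitrary α
  have hfg : ∀ β < ξ, f β = g β := fun β hβ => (if_pos hβ).symm
  have hex : ∃ a, P ξ g a := (hstep ξ f ih).imp fun a => hlocal ξ f g a hfg
  have hfξ : f ξ = hex.choose := (wellFounded_lt.fix_eq _ ξ).trans (dif_pos hex)
  exact hlocal ξ g f _ (fun β hβ => (hfg β hβ).symm) (hfξ ▸ hex.choose_spec)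

section Topology

variable {X : Type*} [TopologicalSpace X]

def CountableTightness (X : Type*) [TopologicalSpace X] : Prop :=
  ∀ (S : Set X) (p : X), p ∈ closure S → ∃ T, T ⊆ S ∧ T.Countable ∧ p ∈ closure T

def IsLocalPiNet (A : Set (Set X)) (x : X) : Prop :=
  ∀ U ∈ 𝓝 x, ∃ a ∈ A, a ⊆ U

theorem Set.Countable.setOf_finset_subset {α : Type*} {s : Set α} (hs : s.Countable) :
    {u : Finset α | ↑u ⊆ s}.Countable :=
  ((countable_ofPred_finite_subset hs).preimage Finset.coe_injective).mono
    fun u hu => show _ ∧ _ from ⟨u.finite_toSet, hu⟩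

theorem exists_forall_mem_closure_of_directed [CompactSpace X] {κ : Type*} [Nonempty κ]
    {s : κ → Set X} (hd : Directed (· ⊇ ·) s) (hne : ∀ i, (s i).Nonempty) :
    ∃ z, ∀ i, z ∈ closure (s i) := by
  obtain ⟨z, hz⟩ := IsCompact.nonempty_iInter_of_directed_nonempty_isCompact_isClosed
    (fun i => closure (s i)) (hd.mono_comp (g := closure) _ fun _ _ => closure_mono)
    (fun i => (hne i).closure) (fun _ => isClosed_closure.isCompact) (fun _ => isClosed_closure)
  exact ⟨z, mem_iInter.mp hz⟩

end Topology

section Positive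

variable {X : Type*} {F : ℕ → Set X} {G : Set X}

/-- `G ∈ F⁺` -/
def IsPositive (F : ℕ → Set X) (G : Set X) : Prop :=
  ∀ n, (G ∩ F n).Nonempty

theorem IsPositive.nonempty (h : IsPositive F G) : G.Nonempty :=
  (h 0).mono inter_subset_left

theorem isPositive_univ (hF : ∀ n, (F n).Nonempty) : IsPositive F univ := by
  simpa [IsPositive] using hF

theorem IsPositive.inter (hF : Antitone F) (h : IsPositive F G) (n : ℕ) :
    IsPositive F (F n ∩ G) := fun m =>
  (h (max n m)).mono fun _ hx =>
    ⟨⟨hF (le_max_left n m) hx.2, hx.1⟩, hF (le_max_right n m) hx.2⟩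

end Positive

section Cut

variable {X ι : Type*} [LinearOrder ι] {V W : ι → Set X × Set X} {u v : Finset ι} {α : ι}

/-- The point `x α` of the free sequence is to lie in `cutSide α β (V β)` for every `β`:
in the second set of the pair below the cut `α`, in the first one from `α` on. -/
def cutSide (α β : ι) (P : Set X × Set X) : Set X :=
  if β < α then P.2 else P.1

def cutPattern (V : ι → Set X × Set X) (u : Finset ι) (α : ι) : Set X :=
  ⋂ β ∈ u, cutSide α β (V β)

theorem cutPattern_congr {α' : ι} (hV : ∀ β ∈ u, V β = W β) (hα : ∀ β ∈ u, (β < α ↔ β < α')) :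
    cutPattern V u α = cutPattern W u α' :=
  iInter₂_congr fun β hβ => by simp only [cutSide, hV β hβ, hα β hβ]

@[simp]
theorem cutPattern_empty : cutPattern V ∅ α = univ := by
  simp [cutPattern]

theorem cutPattern_insert [DecidableEq ι] (β : ι) :
    cutPattern V (insert β u) α = cutSide α β (V β) ∩ cutPattern V u α :=
  Finset.set_biInter_insert _ _ _

theorem cutPattern_anti (h : u ⊆ v) : cutPattern V v α ⊆ cutPattern V u α :=
  biInter_subset_biInter_left h

theorem finite_range_cutPattern (V : ι → Set X × Set X) (u : Finset ι) :
    (range (cutPattern V u)).Finite := by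
  classical
  refine ((u.powerset : Set (Finset ι)).toFinite.image
    fun w => ⋂ β ∈ u, if β ∈ w then (V β).2 else (V β).1).subset ?_
  rintro _ ⟨α, rfl⟩
  refine ⟨u.filter (· < α), Finset.mem_coe.2 (Finset.mem_powerset.2 (Finset.filter_subset _ _)),
    iInter₂_congr fun β hβ => ?_⟩
  simp [cutSide, hβ]

variable [TopologicalSpace X]

theorem isClosed_cutPattern (hV : ∀ β, IsClosed (V β).1 ∧ IsClosed (V β).2) :
    IsClosed (cutPattern V u α) :=
  isClosed_biInter fun β _ => by
    unfold cutSide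
    split_ifs
    exacts [(hV β).2, (hV β).1]

theorem exists_forall_mem_cutSide [CompactSpace X]
    (hV : ∀ β, IsClosed (V β).1 ∧ IsClosed (V β).2) (hne : ∀ u α, (cutPattern V u α).Nonempty)
    (α : ι) : ∃ x, ∀ β, x ∈ cutSide α β (V β) := by
  obtain ⟨x, hx⟩ := exists_forall_mem_closure_of_directed
    (Antitone.directed_ge fun _ _ => cutPattern_anti (V := V) (α := α)) (hne · α)
  refine ⟨x, fun β => ?_⟩
  have hβ := hx {β}
  rw [(isClosed_cutPattern hV).closure_eq] at hβ
  simpa [cutPattern] using hβ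

/-- An `ι`-long free sequence rules out countable tightness. -/
theorem false_of_cutPattern_nonempty [CompactSpace X] (hct : CountableTightness X)
    [Nonempty ι] [NoMaxOrder ι] (hbdd : ∀ s : Set ι, s.Countable → BddAbove s)
    (hV : ∀ β, IsClosed (V β).1 ∧ IsClosed (V β).2) (hdisj : ∀ β, Disjoint (V β).1 (V β).2)
    (hne : ∀ u α, (cutPattern V u α).Nonempty) : False := by
  choose x hx using exists_forall_mem_cutSide hV hne
  have hfst {γ δ : ι} (h : γ ≤ δ) : x γ ∈ (V δ).1 := by
    simpa [cutSide, not_lt.mpr h] using hx γ δ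
  have hsnd {γ δ : ι} (h : δ < γ) : x γ ∈ (V δ).2 := by
    simpa [cutSide, h] using hx γ δ
  obtain ⟨p, hp⟩ := exists_forall_mem_closure_of_directed (s := fun α => x '' Ioi α)
    (Antitone.directed_ge fun _ _ h => image_mono (Ioi_subset_Ioi h))
    (fun α => nonempty_Ioi.image x)
  obtain ⟨T, hTx, hTc, hpT⟩ := hct (range x) p
    (closure_mono (image_subset_range _ _) (hp (Classical.arbitrary ι)))
  choose g hg using hTx
  have := hTc.to_subtype
  obtain ⟨δ, hδ⟩ := hbdd (range fun t : T => g t.2) (countable_range _)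
  have hT : T ⊆ (V δ).1 := fun t ht => hg ht ▸ hfst (hδ ⟨⟨t, ht⟩, rfl⟩)
  have hp₁ : p ∈ (V δ).1 := closure_minimal hT (hV δ).1 hpT
  have hp₂ : p ∈ (V δ).2 :=
    closure_minimal (image_subset_iff.mpr fun _ => hsnd) (hV δ).2 (hp δ)
  exact (hdisj δ).notMem_of_mem_left hp₁ hp₂

end Cut

section Split

variable {X ι : Type*} [TopologicalSpace X] [LinearOrder ι] {F : ℕ → Set X}
  {f g : ι → Set X × Set X} {ξ : ι}

/-- `P` extends the pairs `f β`, `β < ξ`, keeping every cut pattern below `ξ` `F`-positive. -/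
structure PositiveSplit (F : ℕ → Set X) (f : ι → Set X × Set X) (ξ : ι) (P : Set X × Set X) :
    Prop where
  isClosed_fst : IsClosed P.1
  isClosed_snd : IsClosed P.2
  disjoint : Disjoint P.1 P.2
  isPositive : ∀ u : Finset ι, (∀ β ∈ u, β < ξ) → ∀ α,
    IsPositive F (cutPattern f u α ∩ cutSide α ξ P)

theorem PositiveSplit.congr {P : Set X × Set X} (h : PositiveSplit F f ξ P)
    (hfg : ∀ β < ξ, f β = g β) : PositiveSplit F g ξ P where
  __ := h
  isPositive u hu α := by
    rw [← cutPattern_congr (fun β hβ => hfg β (hu β hβ)) fun _ _ => Iff.rfl]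
    exact h.isPositive u hu α

theorem isPositive_cutPattern (hF : ∀ n, (F n).Nonempty) (u : Finset ι)
    (hu : ∀ β ∈ u, PositiveSplit F f β (f β)) (α : ι) : IsPositive F (cutPattern f u α) := by
  classical
  induction u using Finset.induction_on_max with
  | empty => simpa using isPositive_univ hF
  | insert β u hlt _ =>
    rw [cutPattern_insert, inter_comm]
    exact (hu β (Finset.mem_insert_self β u)).isPositive u hlt α

theorem exists_positiveSplit_of_nhds [RegularSpace X] {z : X} {U : Set X} (hU : U ∈ 𝓝 z)
    (hz : ∀ u : Finset ι, (∀ β ∈ u, β < ξ) → ∀ n, z ∈ closure (F n ∩ cutPattern f u ξ))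
    (hUc : ∀ u : Finset ι, (∀ β ∈ u, β < ξ) → ∀ α n, ¬ F n ∩ cutPattern f u α ⊆ U) :
    ∃ P, PositiveSplit F f ξ P := by
  obtain ⟨W, hW, hWc, hWU⟩ := exists_mem_nhds_isClosed_subset (interior_mem_nhds.2 hU)
  refine ⟨((interior U)ᶜ, W), isOpen_interior.isClosed_compl, hWc,
    disjoint_compl_left_iff_subset.2 hWU, fun u hu α n => ?_⟩
  unfold cutSide
  split_ifs with hξα
  · have hcut : cutPattern f u α = cutPattern f u ξ :=
      cutPattern_congr (fun _ _ => rfl) fun β hβ =>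
        ⟨fun _ => hu β hβ, fun hβξ => hβξ.trans hξα⟩
    obtain ⟨y, hyW, hyF, hyP⟩ := mem_closure_iff_nhds.1 (hz u hu n) W hW
    exact ⟨y, ⟨hcut ▸ hyP, hyW⟩, hyF⟩
  · obtain ⟨y, ⟨hyF, hyP⟩, hyU⟩ := not_subset.1 (hUc u hu α n)
    exact ⟨y, ⟨hyP, fun hy => hyU (interior_subset hy)⟩, hyF⟩

theorem exists_positiveSplit [CompactSpace X] [T2Space X] (hF : Antitone F)
    (hno : ∀ x ∈ ⋂ n, closure (F n), ∀ A : Set (Set X), A.Countable →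
      (∀ a ∈ A, IsPositive F a) → ¬ IsLocalPiNet A x)
    (hξ : (Iio ξ).Countable)
    (hf : ∀ u : Finset ι, (∀ β ∈ u, β < ξ) → ∀ α, IsPositive F (cutPattern f u α)) :
    ∃ P, PositiveSplit F f ξ P := by
  have : Nonempty {u : Finset ι // ∀ β ∈ u, β < ξ} := ⟨⟨∅, by simp⟩⟩
  obtain ⟨z, hz⟩ := exists_forall_mem_closure_of_directed
    (κ := {u : Finset ι // ∀ β ∈ u, β < ξ} × ℕ) (s := fun i => F i.2 ∩ cutPattern f i.1 ξ)
    (by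
      rintro ⟨⟨u, hu⟩, n⟩ ⟨⟨v, hv⟩, m⟩
      refine ⟨⟨⟨u ∪ v, fun β hβ => (Finset.mem_union.1 hβ).elim (hu β) (hv β)⟩, max n m⟩,
        inter_subset_inter (hF (le_max_left n m)) (cutPattern_anti Finset.subset_union_left),
        inter_subset_inter (hF (le_max_right n m)) (cutPattern_anti Finset.subset_union_right)⟩)
    fun i => (hf i.1 i.1.2 ξ).inter hF i.2 |>.nonempty
  have hzF : z ∈ ⋂ n, closure (F n) :=
    mem_iInter.2 fun n => closure_mono inter_subset_left (hz (⟨∅, by simp⟩, n))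
  let A : Set (Set X) := ⋃ n, ⋃ u ∈ {u : Finset ι | ∀ β ∈ u, β < ξ},
    (F n ∩ ·) '' range (cutPattern f u)
  have hmem : ∀ u : Finset ι, (∀ β ∈ u, β < ξ) → ∀ α n, F n ∩ cutPattern f u α ∈ A :=
    fun u hu α n => mem_iUnion.2 ⟨n, mem_iUnion₂.2 ⟨u, hu, mem_image_of_mem _ (mem_range_self α)⟩⟩
  have hAc : A.Countable := countable_iUnion fun n =>
    hξ.setOf_finset_subset.biUnion fun u _ =>
      ((finite_range_cutPattern f u).image _).countable
  have hApos : ∀ a ∈ A, IsPositive F a := by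
    simp only [A, mem_iUnion, mem_image, mem_range]
    rintro _ ⟨n, u, hu, _, ⟨α, rfl⟩, rfl⟩
    exact (hf u hu α).inter hF n
  obtain ⟨U, hU, hUA⟩ : ∃ U ∈ 𝓝 z, ∀ a ∈ A, ¬ a ⊆ U := by
    simpa [IsLocalPiNet] using hno z hzF A hAc hApos
  exact exists_positiveSplit_of_nhds hU (fun u hu n => hz (⟨u, hu⟩, n))
    fun u hu α n => hUA _ (hmem u hu α n)

theorem exists_forall_positiveSplit [CompactSpace X] [T2Space X] [WellFoundedLT ι]
    (hι : ∀ ξ : ι, (Iio ξ).Countable) (hFne : ∀ n, (F n).Nonempty) (hF : Antitone F)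
    (hno : ∀ x ∈ ⋂ n, closure (F n), ∀ A : Set (Set X), A.Countable →
      (∀ a ∈ A, IsPositive F a) → ¬ IsLocalPiNet A x) :
    ∃ V : ι → Set X × Set X, ∀ ξ, PositiveSplit F V ξ (V ξ) :=
  WellFoundedLT.exists_forall_of_forall_exists (fun ξ f P => PositiveSplit F f ξ P)
    (fun _ _ _ _ hfg h => h.congr hfg)
    fun ξ _ hf => exists_positiveSplit hF hno (hι ξ) fun u hu =>
      isPositive_cutPattern hFne u fun β hβ => hf β (hu β hβ)

end Split

namespace Ordinal

open Cardinal

theorem countable_Iio_of_lt_omega_one {μ : Ordinal} (h : μ < ω₁) : (Iio μ).Countable := by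
  rw [← le_aleph0_iff_set_countable, Cardinal.mk_Iio_ordinal, lift_le_aleph0,
    ← Order.lt_succ_iff, succ_aleph0, ← lt_ord, ord_aleph]
  exact h

theorem isSuccLimit_omega_one : Order.IsSuccLimit (ω₁ : Ordinal) :=
  ord_aleph 1 ▸ isSuccLimit_ord (aleph0_le_aleph 1)

instance : Nonempty (Iio (ω₁ : Ordinal)) :=
  ⟨⟨0, omega_pos 1⟩⟩

instance : NoMaxOrder (Iio (ω₁ : Ordinal)) :=
  ⟨fun μ => ⟨⟨Order.succ μ, isSuccLimit_omega_one.succ_lt μ.2⟩, Order.lt_succ μ.1⟩⟩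

theorem countable_Iio_omega_one (μ : Iio (ω₁ : Ordinal)) : (Iio μ).Countable :=
  (countable_Iio_of_lt_omega_one μ.2).preimage Subtype.val_injective

theorem bddAbove_Iio_omega_one_of_countable {s : Set (Iio (ω₁ : Ordinal))} (hs : s.Countable) :
    BddAbove s := by
  have := hs.to_subtype
  exact ⟨⟨⨆ μ : s, μ.1.1, iSup_lt_omega_one fun μ => μ.1.2⟩,
    fun μ hμ => le_ciSup bddAbove_of_small (⟨μ, hμ⟩ : s)⟩

end Ordinal

/-- In a compact Hausdorff space of countable tightness, for every decreasing
countable filter base ⟨F_n⟩ there is a point x in the intersection of the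
closures of the F_n together with a countable local π-net at x consisting of
sets positive with respect to the filter base. -/
theorem pi_net_from_countable_filter_base
    {X : Type*} [TopologicalSpace X] [CompactSpace X] [T2Space X]
    (hct : ∀ (S : Set X) (p : X), p ∈ closure S →
      ∃ T, T ⊆ S ∧ T.Countable ∧ p ∈ closure T)
    (F : ℕ → Set X) (hFne : ∀ n, (F n).Nonempty)
    (hFdec : ∀ n, F (n + 1) ⊆ F n) :
    ∃ x ∈ ⋂ n, closure (F n), ∃ A : Set (Set X),
      A.Countable ∧
      (∀ a ∈ A, a.Nonempty ∧ ∀ n, (a ∩ F n).Nonempty) ∧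
      (∀ U ∈ nhds x, ∃ a ∈ A, a ⊆ U) := by
  by_contra hcon
  have hno : ∀ x ∈ ⋂ n, closure (F n), ∀ A : Set (Set X), A.Countable →
      (∀ a ∈ A, IsPositive F a) → ¬ IsLocalPiNet A x := fun x hx A hAc hApos hnet =>
    hcon ⟨x, hx, A, hAc, fun a ha => ⟨(hApos a ha).nonempty, hApos a ha⟩, hnet⟩
  obtain ⟨V, hV⟩ := exists_forall_positiveSplit (ι := Iio (ω₁ : Ordinal.{0}))
    Ordinal.countable_Iio_omega_one hFne (antitone_nat_of_succ_le hFdec) hno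
  exact false_of_cutPattern_nonempty hct (fun _ => Ordinal.bddAbove_Iio_omega_one_of_countable)
    (fun ξ => ⟨(hV ξ).isClosed_fst, (hV ξ).isClosed_snd⟩) (fun ξ => (hV ξ).disjoint)
    fun u α => (isPositive_cutPattern hFne u (fun β _ => hV β) α).nonempty
end

section
/- Let X be a compact Hausdorff space and let ⟨a_n : n ∈ ω⟩ be a sequence in X. Let K be the set of cluster points of this sequence. If K has an isolated point x, then some subsequence of ⟨a_n⟩ converges to x. -/
open Filter Topology

/-!
Choose a compact neighbourhood `s` of `x` inside the isolating neighbourhood. Since `x` is a cluster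
point, infinitely many terms lie in `s`; they form a subsequence with values in a compact set whose
cluster points are cluster points of the whole sequence lying in `s`, hence all equal to `x`. A
sequence in a compact set with a single cluster point converges to it.
-/

theorem Nat.mapClusterPt_atTop_iff_infinite {X : Type*} [TopologicalSpace X] {u : ℕ → X} {x : X} :
    MapClusterPt x atTop u ↔ ∀ V ∈ 𝓝 x, {n | u n ∈ V}.Infinite := by
  simp only [mapClusterPt_iff_frequently, Nat.frequently_atTop_iff_infinite]

theorem MapClusterPt.exists_strictMono_tendsto_of_isolated {X : Type*} [TopologicalSpace X]
    [LocallyCompactSpace X] {u : ℕ → X} {x : X} (hx : MapClusterPt x atTop u) {U : Set X}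
    (hU : U ∈ 𝓝 x) (hiso : ∀ y ∈ U, MapClusterPt y atTop u → y = x) :
    ∃ φ : ℕ → ℕ, StrictMono φ ∧ Tendsto (u ∘ φ) atTop (𝓝 x) := by
  obtain ⟨s, hs, hsU, hs_compact⟩ := local_compact_nhds hU
  obtain ⟨φ, hφ, hφs⟩ := extraction_of_frequently_atTop (mapClusterPt_iff_frequently.mp hx s hs)
  refine ⟨φ, hφ, hs_compact.tendsto_nhds_of_unique_mapClusterPt (.of_forall hφs) ?_⟩
  exact fun y hy hy_cl => hiso y (hsU hy) (hy_cl.of_comp hφ.tendsto_atTop)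

/-- If x is an isolated point of the set K of cluster points of a sequence
⟨a_n⟩ in a compact Hausdorff space, then some subsequence of ⟨a_n⟩ converges
to x. -/
theorem subsequence_converges_to_isolated_cluster_point
    {X : Type*} [TopologicalSpace X] [CompactSpace X] [T2Space X]
    (a : ℕ → X) (K : Set X)
    (hK : K = {z : X | ∀ V ∈ nhds z, {n : ℕ | a n ∈ V}.Infinite})
    (x : X) (hx : x ∈ K)
    (hiso : ∃ U : Set X, IsOpen U ∧ U ∩ K = {x}) :
    ∃ φ : ℕ → ℕ, StrictMono φ ∧
      Filter.Tendsto (a ∘ φ) Filter.atTop (nhds x) := by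
  simp only [hK, ← Nat.mapClusterPt_atTop_iff_infinite] at hx hiso
  obtain ⟨U, hU_open, hUK⟩ := hiso
  have hxU : x ∈ U := (hUK.superset (Set.mem_singleton x)).1
  refine hx.exists_strictMono_tendsto_of_isolated (hU_open.mem_nhds hxU) fun y hyU hy => ?_
  exact (hUK.subset ⟨hyU, hy⟩ : y ∈ ({x} : Set X))
end

section
/- Let D be a countable infinite set and let {(a_α, b_α) : α < ω₁} be a family of pairs of disjoint infinite subsets of D. Suppose that for every E ⊆ D there is α₀ < ω₁ such that for all β ≥ α₀, either both a_β ∩ E and b_β ∩ E are infinite or both a_β \ E and b_β \ E are infinite. Then {(a_α, b_α) : α < ω₁} is a pre-Luzin gap: for every E ⊆ D, the set of α with E ∩ (a_α ∪ b_α) =* a_α is countable. -/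
/-- The ordinals below ω₁. -/
abbrev Omega1 : Type 1 := {o : Ordinal // o < (Cardinal.aleph 1).ord}

/-- If for every E ⊆ D, from some point on each pair (a_β, b_β) either meets E
in two infinite sets or avoids E in two infinite sets, then the family
{(a_α, b_α)} is a pre-Luzin gap: for every E the set of α with
E ∩ (a_α ∪ b_α) =* a_α is countable. -/
theorem pre_Luzin_gap_criterion
    {D : Type*} [Countable D] [Infinite D]
    (a b : Omega1 → Set D)
    (hdisj : ∀ α, Disjoint (a α) (b α))
    (hainf : ∀ α, (a α).Infinite) (hbinf : ∀ α, (b α).Infinite)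
    (h : ∀ E : Set D, ∃ α₀ : Omega1, ∀ β, α₀ ≤ β →
      (((a β) ∩ E).Infinite ∧ ((b β) ∩ E).Infinite) ∨
      (((a β) \ E).Infinite ∧ ((b β) \ E).Infinite)) :
    ∀ E : Set D,
      {α : Omega1 | ((E ∩ (a α ∪ b α)) \ a α).Finite ∧
        (a α \ (E ∩ (a α ∪ b α))).Finite}.Countable := by
  intro E
  obtain ⟨α₀, hα₀⟩ := h E
  have hsub : {α : Omega1 | ((E ∩ (a α ∪ b α)) \ a α).Finite ∧
      (a α \ (E ∩ (a α ∪ b α))).Finite} ⊆ {α : Omega1 | α < α₀} := by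
    intro β hβ
    by_contra hlt
    have hle : α₀ ≤ β := le_of_not_gt (by simpa using hlt)
    obtain ⟨h1, h2⟩ := hβ
    -- b β ∩ E ⊆ (E ∩ (a β ∪ b β)) \ a β
    have hbE : (b β ∩ E).Finite := by
      refine h1.subset ?_
      intro x ⟨hxb, hxE⟩
      exact ⟨⟨hxE, Or.inr hxb⟩, fun hxa => (hdisj β).le_bot ⟨hxa, hxb⟩⟩
    -- a β \ E ⊆ a β \ (E ∩ (a β ∪ b β))
    have haE : (a β \ E).Finite := by
      refine h2.subset ?_
      intro x ⟨hxa, hxE⟩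
      exact ⟨hxa, fun hx => hxE hx.1⟩
    rcases hα₀ β hle with ⟨_, hb⟩ | ⟨ha, _⟩
    · exact hb (hbE.subset (Set.inter_comm E (b β) ▸ Set.Subset.rfl))
    · exact ha haE
  refine Set.Countable.mono hsub ?_
  rw [← Set.countable_coe_iff, ← Cardinal.mk_le_aleph0_iff]
  have hinj : Cardinal.mk {α : Omega1 | α < α₀} ≤ Cardinal.mk (Set.Iio α₀.val) := by
    refine Cardinal.mk_le_of_injective (f := fun x => ⟨x.1.1, x.2⟩) ?_
    intro x y hxy
    simp only [Subtype.mk.injEq] at hxy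
    exact Subtype.ext (Subtype.ext (by have hv := congrArg Subtype.val hxy; exact hv))
  refine hinj.trans ?_
  rw [Ordinal.mk_Iio_ordinal]
  have hcard : (α₀ : Ordinal).card ≤ Cardinal.aleph0 := by
    have h1 := Cardinal.lt_ord.mp α₀.2
    exact Order.lt_succ_iff.mp (lt_of_lt_of_eq h1 Cardinal.succ_aleph0.symm)
  calc Cardinal.lift.{1} (α₀ : Ordinal).card ≤ Cardinal.lift.{1} Cardinal.aleph0 :=
        Cardinal.lift_le.mpr hcard
    _ = Cardinal.aleph0 := Cardinal.lift_aleph0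
end

section
/- Let P be a poset with property K and let {(a_α, b_α) : α < ω₁} be a pre-Luzin gap on ω in the ground model. Then in every forcing extension by P, {(a_α, b_α) : α < ω₁} remains a pre-Luzin gap. -/
/-- A subset of a poset is linked if any two of its elements are compatible. -/
def Linked {P : Type*} [Preorder P] (S : Set P) : Prop :=
  ∀ p ∈ S, ∀ q ∈ S, ∃ r : P, r ≤ p ∧ r ≤ q

/-- A poset has property K if every uncountable subset has an uncountable
linked subset. -/
def PropertyK (P : Type*) [Preorder P] : Prop :=
  ∀ S : Set P, ¬ S.Countable → ∃ T ⊆ S, ¬ T.Countable ∧ Linked T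

/-- A name for a subset of ω is coded by `N : ℕ → Set P`, where `N j` is the
set of conditions deciding `j` into the set.  `p` forces `j` into the set iff
the conditions in `N j` are dense below `p`. -/
def ForcesIn {P : Type*} [Preorder P] (N : ℕ → Set P) (p : P) (j : ℕ) : Prop :=
  ∀ q ≤ p, ∃ r ≤ q, r ∈ N j

/-- `p` forces `j` out of the set iff no condition below `p` is in `N j`. -/
def ForcesOut {P : Type*} [Preorder P] (N : ℕ → Set P) (p : P) (j : ℕ) : Prop :=
  ∀ q ≤ p, q ∉ N j

/-- Preservation of pre-Luzin gaps by property K forcing: if P has property K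
and {(a_α, b_α)} is a pre-Luzin gap on ω, then the gap remains pre-Luzin in
every forcing extension by P.  Equivalently (and as formalized here): there is
no name Ė for a subset of ω, no uncountable set A of indices, and no conditions
p_α and integers n_α for α ∈ A such that
p_α ⊩ Ė ∩ (a_α ∪ b_α) \ n_α = a_α \ n_α for each α ∈ A. -/
theorem property_K_preserves_pre_Luzin_gaps
    {P : Type*} [Preorder P] (hK : PropertyK P)
    (a b : Omega1 → Set ℕ)
    (hdisj : ∀ α, Disjoint (a α) (b α))
    (hgap : ∀ E : Set ℕ,
      {α : Omega1 | ((E ∩ (a α ∪ b α)) \ a α).Finite ∧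
        (a α \ (E ∩ (a α ∪ b α))).Finite}.Countable) :
    ∀ N : ℕ → Set P,
      ¬ ∃ (A : Set Omega1) (p : Omega1 → P) (n : Omega1 → ℕ),
        ¬ A.Countable ∧
        ∀ α ∈ A, ∀ j : ℕ, n α ≤ j →
          (j ∈ a α → ForcesIn N (p α) j) ∧
          (j ∈ b α → ForcesOut N (p α) j) := by

  intro N
  rintro ⟨A, p, n, hA, hforce⟩
  -- Step 1: find m with uncountably many α ∈ A having n α = m
  obtain ⟨m, hm⟩ : ∃ m, ¬ {α | α ∈ A ∧ n α = m}.Countable := by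
    by_contra h
    push_neg at h
    apply hA
    have hAeq : A = ⋃ m : ℕ, {α | α ∈ A ∧ n α = m} := by
      ext α
      simp only [Set.mem_iUnion, Set.mem_setOf_eq]
      exact ⟨fun hα => ⟨n α, hα, rfl⟩, fun ⟨_, hα, _⟩ => hα⟩
    rw [hAeq]
    exact Set.countable_iUnion h
  set A1 : Set Omega1 := {α | α ∈ A ∧ n α = m} with hA1def
  -- Step 2: find uncountable A2 ⊆ A1 with pairwise compatible conditions
  obtain ⟨A2, hA2sub, hA2unc, hA2link⟩ :
      ∃ A2 ⊆ A1, ¬ A2.Countable ∧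
        ∀ α ∈ A2, ∀ β ∈ A2, ∃ r, r ≤ p α ∧ r ≤ p β := by
    by_cases himg : (p '' A1).Countable
    · obtain ⟨q, _, hqunc⟩ : ∃ q ∈ p '' A1, ¬ {α | α ∈ A1 ∧ p α = q}.Countable := by
        by_contra h
        push_neg at h
        apply hm
        have hA1eq : A1 = ⋃ q ∈ p '' A1, {α | α ∈ A1 ∧ p α = q} := by
          ext α
          simp only [Set.mem_iUnion, Set.mem_setOf_eq, Set.mem_image]
          constructor
          · intro hα; exact ⟨p α, ⟨α, hα, rfl⟩, hα, rfl⟩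
          · rintro ⟨q, _, hα, _⟩; exact hα
        rw [hA1eq]
        exact himg.biUnion h
      refine ⟨{α | α ∈ A1 ∧ p α = q}, fun α hα => hα.1, hqunc, ?_⟩
      intro α hα β hβ
      exact ⟨p α, le_refl _, by rw [hα.2, ← hβ.2]⟩
    · obtain ⟨T, hTsub, hTunc, hTlink⟩ := hK (p '' A1) himg
      refine ⟨{α | α ∈ A1 ∧ p α ∈ T}, fun α hα => hα.1, ?_, ?_⟩
      · intro h
        apply hTunc
        have : T ⊆ p '' {α | α ∈ A1 ∧ p α ∈ T} := by
          intro t ht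
          obtain ⟨α, hα, rfl⟩ := hTsub ht
          exact ⟨α, ⟨hα, ht⟩, rfl⟩
        exact (h.image p).mono this
      · intro α hα β hβ
        exact hTlink _ hα.2 _ hβ.2
  -- Step 3: define E and derive a contradiction with hgap
  set E : Set ℕ := {j | ∃ α ∈ A2, ForcesIn N (p α) j} with hEdef
  apply hA2unc
  refine (hgap E).mono ?_
  intro α hα
  have hαA : α ∈ A := (hA2sub hα).1
  have hnα : n α = m := (hA2sub hα).2
  constructor
  · refine (Set.finite_Iio m).subset ?_
    intro j hj
    by_contra hjm
    have hjm' : m ≤ j := not_lt.mp hjm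
    have hjb : j ∈ b α := hj.1.2.resolve_left hj.2
    have hout : ForcesOut N (p α) j :=
      ((hforce α hαA j (hnα ▸ hjm')).2) hjb
    obtain ⟨β, hβ, hin⟩ := hj.1.1
    obtain ⟨r, hrα, hrβ⟩ := hA2link α hα β hβ
    obtain ⟨s, hsr, hsN⟩ := hin r hrβ
    exact hout s (hsr.trans hrα) hsN
  · refine (Set.finite_Iio m).subset ?_
    intro j hj
    by_contra hjm
    have hjm' : m ≤ j := not_lt.mp hjm
    have hin : ForcesIn N (p α) j :=
      ((hforce α hαA j (hnα ▸ hjm')).1) hj.1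
    exact hj.2 ⟨⟨α, hα, hin⟩, Or.inl hj.1⟩
end

section
/- Let X be a compact Hausdorff subspace of [0,1]^κ and let Γ ⊆ κ. Suppose Y ⊆ X is such that every point y ∈ Y has a neighbourhood base (in X) consisting of basic open sets whose supports are contained in Γ. Then the projection π_Γ : [0,1]^κ → [0,1]^Γ restricted to Y is a homeomorphism onto its image π_Γ[Y]. -/
/-- If every point of Y ⊆ X ⊆ [0,1]^κ has a neighbourhood base (in X) of open
sets whose supports are contained in Γ (i.e. membership depends only on the
Γ-coordinates), then the projection π_Γ restricted to Y is a homeomorphism onto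
its image, i.e. an embedding of Y into [0,1]^Γ. -/
theorem projection_embedding_of_supported_neighbourhood_bases
    {ι : Type*} (X : Set (ι → unitInterval)) (hX : IsCompact X)
    (Γ : Set ι) (Y : Set (ι → unitInterval)) (hYX : Y ⊆ X)
    (hbase : ∀ y ∈ Y, ∀ V ∈ nhds y, ∃ B : Set (ι → unitInterval),
      y ∈ B ∧ IsOpen B ∧ X ∩ B ⊆ V ∧
      ∀ u v : ι → unitInterval, (∀ γ ∈ Γ, u γ = v γ) → (u ∈ B ↔ v ∈ B)) :
    Topology.IsEmbedding
      (fun p : ↥Y => (fun γ : ↥Γ => (p : ι → unitInterval) ↑γ)) := by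
  classical
  set f : ↥Y → (↥Γ → unitInterval) := fun p γ => (p : ι → unitInterval) ↑γ with hf
  have hcont : Continuous f := by
    apply continuous_pi
    intro γ
    exact (continuous_apply (γ : ι)).comp continuous_subtype_val
  have hinj : Function.Injective f := by
    intro a b hab
    by_contra hne
    have hne' : (a : ι → unitInterval) ≠ (b : ι → unitInterval) :=
      fun h => hne (Subtype.ext h)
    have hV : ({(b : ι → unitInterval)}ᶜ : Set (ι → unitInterval)) ∈ nhds (a : ι → unitInterval) :=
      (isOpen_compl_singleton).mem_nhds hne'
    obtain ⟨B, haB, hBopen, hBsub, hBinv⟩ := hbase a a.2 _ hV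
    have hagree : ∀ γ ∈ Γ, (b : ι → unitInterval) γ = (a : ι → unitInterval) γ := by
      intro γ hγ
      exact (congrFun hab ⟨γ, hγ⟩).symm
    have hbB : (b : ι → unitInterval) ∈ B := (hBinv _ _ hagree).mpr haB
    have : (b : ι → unitInterval) ∈ ({(b : ι → unitInterval)}ᶜ : Set (ι → unitInterval)) :=
      hBsub ⟨hYX b.2, hbB⟩
    exact this rfl
  refine ⟨?_, hinj⟩
  rw [Topology.isInducing_iff_nhds]
  intro y
  refine le_antisymm (Filter.tendsto_iff_comap.mp hcont.continuousAt) ?_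
  intro V hV
  rw [Filter.mem_comap]
  rw [nhds_subtype, Filter.mem_comap] at hV
  obtain ⟨V', hV', hV'sub⟩ := hV
  obtain ⟨B, hyB, hBopen, hBsub, hBinv⟩ := hbase y y.2 V' hV'
  -- section σ : extend a Γ-indexed point by y's coordinates
  set σ : (↥Γ → unitInterval) → (ι → unitInterval) :=
    fun w i => if h : i ∈ Γ then w ⟨i, h⟩ else (y : ι → unitInterval) i with hσ
  have hσcont : Continuous σ := by
    apply continuous_pi
    intro i
    by_cases h : i ∈ Γ
    · simpa [hσ, h] using (continuous_apply (⟨i, h⟩ : ↥Γ))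
    · simpa [hσ, h] using (continuous_const : Continuous fun _ : ↥Γ → unitInterval =>
        (y : ι → unitInterval) i)
  have key : ∀ z : ι → unitInterval, σ (fun γ : ↥Γ => z ↑γ) ∈ B ↔ z ∈ B := by
    intro z
    apply hBinv
    intro γ hγ
    simp [hσ, hγ]
  refine ⟨σ ⁻¹' B, ?_, ?_⟩
  · exact (hBopen.preimage hσcont).mem_nhds (by simpa [hf] using (key (y : ι → unitInterval)).mpr hyB)
  · intro z hz
    have hzB : (z : ι → unitInterval) ∈ B := (key (z : ι → unitInterval)).mp hz
    exact hV'sub (hBsub ⟨hYX z.2, hzB⟩)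
end

section
/- Let X be a compact Hausdorff, first-countable, ω₁-free space (no injective converging ω₁-sequence) and suppose ⟨x_α : α < ω₁⟩ is an injective ω₁-sequence in X. Then there exist two open sets O₁, O₂ with disjoint closures such that each O_i contains x_α for uncountably many α. -/
open Filter Topology Set Cardinal

instance : Uncountable Omega1 := by
  rw [← aleph0_lt_mk_iff]
  have : #Omega1 = lift.{1} (ℵ₁ : Cardinal.{0}) :=
    (mk_Iio_ordinal _).trans (by rw [card_ord])
  rw [this, ← lift_aleph0.{1, 0}, lift_lt]
  exact aleph0_lt_aleph_one

namespace Filter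

variable {ι : Type*}

instance countableInterFilter_cocountable : CountableInterFilter (cocountable : Filter ι) :=
  CardinalInterFilter.toCountableInterFilter _ aleph0_lt_aleph_one

instance cocountable_neBot [Uncountable ι] : (cocountable : Filter ι).NeBot := by
  rw [neBot_iff]
  intro h
  have := mem_cocountable.1 (h ▸ mem_bot : ∅ ∈ (cocountable : Filter ι))
  exact not_countable_univ (by simpa using this)

variable {X : Type*} [TopologicalSpace X] {f : ι → X} {p : X}

theorem Tendsto.eventually_eq_of_countableInterFilter [T1Space X] [FirstCountableTopology X]
    {l : Filter ι} [CountableInterFilter l] (h : Tendsto f l (𝓝 p)) : ∀ᶠ i in l, f i = p := by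
  obtain ⟨U, hU⟩ := (𝓝 p).exists_antitone_basis
  have hbasis : ∀ᶠ i in l, ∀ n, f i ∈ U n :=
    eventually_countable_forall.2 fun n => h (hU.mem n)
  filter_upwards [hbasis] with i hi
  have : f i ∈ (𝓝 p).ker := by
    rw [hU.ker]
    simpa using hi
  simpa [ker_nhds] using this

end Filter

section

variable {ι X : Type*} [TopologicalSpace X] {f : ι → X}

theorem Function.Injective.not_tendsto_cocountable [T1Space X] [FirstCountableTopology X]
    [Uncountable ι] (hf : f.Injective) (p : X) : ¬ Tendsto f cocountable (𝓝 p) := by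
  intro h
  have hcompl : {i | f i = p}ᶜ.Countable :=
    mem_cocountable.1 h.eventually_eq_of_countableInterFilter
  have hfiber : {i | f i = p}.Countable :=
    Subsingleton.countable fun i hi j hj => hf (hi.trans hj.symm)
  exact not_countable_univ (by simpa using hfiber.union hcompl)

theorem exists_ne_mapClusterPt_of_forall_not_tendsto [CompactSpace X] {l : Filter ι} [NeBot l]
    (h : ∀ p, ¬ Tendsto f l (𝓝 p)) :
    ∃ p q, p ≠ q ∧ MapClusterPt p l f ∧ MapClusterPt q l f := by
  obtain ⟨p, hp⟩ := exists_clusterPt_of_compactSpace (map f l)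
  by_contra! hne
  exact h p <| tendsto_nhds_of_unique_mapClusterPt fun q hq =>
    not_not.1 fun hqp => hne q p hqp hq hp

theorem MapClusterPt.not_countable_preimage_of_cocountable {p : X}
    (h : MapClusterPt p cocountable f) {U : Set X} (hU : U ∈ 𝓝 p) : ¬ (f ⁻¹' U).Countable := by
  rw [← countable_coe_iff, not_countable_iff, ← aleph0_lt_mk_iff, ← Order.succ_le_iff,
    succ_aleph0]
  exact frequently_cocardinal.1 (mapClusterPt_iff_frequently.1 h U hU)

end

theorem two_uncountable_open_sets_with_disjoint_closures_general
    {X : Type*} [TopologicalSpace X] [CompactSpace X] [T2Space X]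
    [FirstCountableTopology X]
    (x : Omega1 → X) (hx : Function.Injective x) :
    ∃ O₁ O₂ : Set X, IsOpen O₁ ∧ IsOpen O₂ ∧
      Disjoint (closure O₁) (closure O₂) ∧
      ¬ {α : Omega1 | x α ∈ O₁}.Countable ∧
      ¬ {α : Omega1 | x α ∈ O₂}.Countable := by
  obtain ⟨p, q, hpq, hp, hq⟩ :=
    exists_ne_mapClusterPt_of_forall_not_tendsto (l := cocountable) hx.not_tendsto_cocountable
  obtain ⟨O₁, hpO₁, hO₁, O₂, hqO₂, hO₂, hdisj⟩ := exists_open_nhds_disjoint_closure hpq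
  exact ⟨O₁, O₂, hO₁, hO₂, hdisj, hp.not_countable_preimage_of_cocountable (hO₁.mem_nhds hpO₁),
    hq.not_countable_preimage_of_cocountable (hO₂.mem_nhds hqO₂)⟩

/-- In a compact Hausdorff first-countable ω₁-free space, every injective
ω₁-sequence admits two open sets with disjoint closures each of which contains
uncountably many terms of the sequence. -/
theorem two_uncountable_open_sets_with_disjoint_closures
    {X : Type*} [TopologicalSpace X] [CompactSpace X] [T2Space X]
    [FirstCountableTopology X]
    (hfree : ¬ ∃ (x : Omega1 → X) (p : X), Function.Injective x ∧
      ∀ U ∈ nhds p, ∃ α₀ : Omega1, ∀ β, α₀ ≤ β → x β ∈ U)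
    (x : Omega1 → X) (hx : Function.Injective x) :
    ∃ O₁ O₂ : Set X, IsOpen O₁ ∧ IsOpen O₂ ∧
      Disjoint (closure O₁) (closure O₂) ∧
      ¬ {α : Omega1 | x α ∈ O₁}.Countable ∧
      ¬ {α : Omega1 | x α ∈ O₂}.Countable :=
  two_uncountable_open_sets_with_disjoint_closures_general x hx
end

section
/- Let D be a countable set, e : ω → D a bijection into a topological space X, and suppose {(a_α, b_α) : α < ω₁} is a pre-Luzin gap on ω such that for each α, e[a_α] converges to a fixed point z ∈ X and e[b_α] converges to a point y_α ∈ X. Then the sequence ⟨y_α : α < ω₁⟩ converges to z in the sense that for every open neighbourhood U of z, y_α ∈ closure(U) for all but countably many α. -/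
/-- Lifting convergence along a pre-Luzin gap: if {(a_α, b_α)} is a pre-Luzin
gap on ω, e[a_α] converges to z for every α and e[b_α] converges to y_α, then
⟨y_α⟩ converges to z in the sense that for every open neighbourhood U of z we
have y_α ∈ closure U for all but countably many α. -/
theorem pre_Luzin_gap_lifts_convergence
    {X : Type*} [TopologicalSpace X]
    (e : ℕ → X) (he : Function.Injective e)
    (a b : Omega1 → Set ℕ)
    (hdisj : ∀ α, Disjoint (a α) (b α))
    (hgap : ∀ E : Set ℕ,
      {α : Omega1 | ((E ∩ (a α ∪ b α)) \ a α).Finite ∧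
        (a α \ (E ∩ (a α ∪ b α))).Finite}.Countable)
    (z : X) (y : Omega1 → X)
    (ha : ∀ (α : Omega1), ∀ V ∈ nhds z, (e '' a α \ V).Finite)
    (hb : ∀ (α : Omega1), ∀ V ∈ nhds (y α), (e '' b α \ V).Finite) :
    ∀ U : Set X, IsOpen U → z ∈ U →
      {α : Omega1 | y α ∉ closure U}.Countable := by
  intro U hU hz
  apply (hgap (e ⁻¹' U)).mono
  intro α hα
  simp only [Set.mem_setOf_eq] at hα ⊢
  constructor
  · have h1 : (e '' b α \ (closure U)ᶜ).Finite :=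
      hb α _ ((isOpen_compl_iff.mpr isClosed_closure).mem_nhds hα)
    refine (h1.preimage he.injOn).subset ?_
    rintro x ⟨⟨hxU, hxab⟩, hxa⟩
    exact ⟨⟨x, hxab.resolve_left hxa, rfl⟩, fun h => h (subset_closure hxU)⟩
  · have h1 : (e '' a α \ U).Finite := ha α U (hU.mem_nhds hz)
    refine (h1.preimage he.injOn).subset ?_
    rintro x ⟨hxa, hx⟩
    exact ⟨⟨x, hxa, rfl⟩, fun hU' => hx ⟨hU', Or.inl hxa⟩⟩
end
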